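/- Suppose f is five times differentiable at t = 1 with f(1) = 0, f'(1) = -1, and Ψ(t) := -t/f(t)³ + t² f'(t)²/(2f(t)²) - t³ f'(t)³/f(t)³ extends to a function equal to a constant c near t = 1. Then f''(1) = 1/2, f'''(1) = -3/4, and f''''(1) = (15 + 16c)/8. -/
import Mathlib

open Set Filter

set_option maxHeartbeats 2000000

lemma zero_on_Ioo_deriv {a b : ℝ} {G G' : ℝ → ℝ}
    (h0 : ∀ t ∈ Set.Ioo a b, G t = 0)
    (hD : ∀ t ∈ Set.Ioo a b, HasDerivAt G (G' t) t) :
    ∀ t ∈ Set.Ioo a b, G' t = 0 := by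
  intro t ht
  have hev : G =ᶠ[nhds t] (fun _ => (0:ℝ)) :=
    Filter.eventuallyEq_of_mem (isOpen_Ioo.mem_nhds ht) h0
  have h1 : HasDerivAt G 0 t := (hasDerivAt_const t 0).congr_of_eventuallyEq hev
  exact (hD t ht).unique h1

lemma boundary_deriv_zero {a b L : ℝ} (hab : a < b) {G : ℝ → ℝ}
    (hD : HasDerivAt G L b)
    (h0 : ∀ t ∈ Set.Ioo a b, G t = 0) (hb : G b = 0) : L = 0 := by
  have hne : (nhdsWithin b (Set.Ioo a b)).NeBot := by
    apply mem_closure_iff_nhdsWithin_neBot.mp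
    rw [closure_Ioo hab.ne]
    exact Set.right_mem_Icc.mpr hab.le
  have h1 : Filter.Tendsto (slope G b) (nhdsWithin b (Set.Ioo a b)) (nhds L) := by
    apply (hasDerivAt_iff_tendsto_slope.mp hD).mono_left
    apply nhdsWithin_mono
    intro x hx
    exact Set.mem_compl_singleton_iff.mpr (ne_of_lt hx.2)
  have h2 : Filter.Tendsto (slope G b) (nhdsWithin b (Set.Ioo a b)) (nhds 0) := by
    apply Filter.Tendsto.congr' _ tendsto_const_nhds
    filter_upwards [self_mem_nhdsWithin] with x hx
    simp [slope_def_field, h0 x hx, hb]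
  exact tendsto_nhds_unique h1 h2

theorem taylor_coeffs_of_psi_constant (f : ℝ → ℝ) (c : ℝ)
    (hf : ContDiffAt ℝ 5 f 1) (h0 : f 1 = 0) (h1 : deriv f 1 = -1)
    (hψ : ∃ ε > (0:ℝ), ∀ t ∈ Set.Ioo (1 - ε) 1,
        -t / f t ^ 3 + t ^ 2 * (deriv f t) ^ 2 / (2 * f t ^ 2)
          - t ^ 3 * (deriv f t) ^ 3 / f t ^ 3 = c) :
    iteratedDeriv 2 f 1 = 1/2 ∧ iteratedDeriv 3 f 1 = -3/4
      ∧ iteratedDeriv 4 f 1 = (15 + 16 * c) / 8 := by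
  obtain ⟨ε, hε, heq⟩ := hψ
  obtain ⟨U, hUmem, hfU⟩ := hf.contDiffOn le_rfl (by simp)
  obtain ⟨U', hU'sub, hU'open, hU'mem⟩ := mem_nhds_iff.mp hUmem
  have hfU' : ContDiffOn ℝ 5 f U' := hfU.mono hU'sub
  have hdU' : ContDiffOn ℝ 4 (deriv f) U' := hfU'.deriv_of_isOpen hU'open (by norm_num)
  have hdcontAt : ContinuousAt (deriv f) 1 :=
    hdU'.continuousOn.continuousAt (hU'open.mem_nhds hU'mem)
  have hnegmem : U' ∩ deriv f ⁻¹' Set.Iio 0 ∈ nhds (1:ℝ) := by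
    refine Filter.inter_mem (hU'open.mem_nhds hU'mem) ?_
    exact hdcontAt.preimage_mem_nhds (Iio_mem_nhds (by rw [h1]; norm_num))
  obtain ⟨δ₀, hδ₀pos, hball⟩ := Metric.mem_nhds_iff.mp hnegmem
  set δ : ℝ := min (δ₀/2) ε with hδdef
  have hδpos : 0 < δ := lt_min (by linarith) hε
  have hδε : δ ≤ ε := min_le_right _ _
  have hδδ₀ : δ < δ₀ := lt_of_le_of_lt (min_le_left _ _) (by linarith)
  set V : Set ℝ := Set.Ioo (1-δ) (1+δ) with hVdef
  set I : Set ℝ := Set.Ioo (1-δ) 1 with hIdef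
  have hVopen : IsOpen V := isOpen_Ioo
  have h1V : (1:ℝ) ∈ V := ⟨by linarith, by linarith⟩
  have hVsub : V ⊆ U' ∩ deriv f ⁻¹' Set.Iio 0 := by
    intro x hx
    apply hball
    rw [Real.ball_eq_Ioo]
    exact ⟨by rcases hx with ⟨hx1,hx2⟩; linarith, by rcases hx with ⟨hx1,hx2⟩; linarith⟩
  have hfV : ContDiffOn ℝ 5 f V := hfU'.mono (fun x hx => (hVsub hx).1)
  have hneg : ∀ t ∈ V, deriv f t < 0 := fun t ht => (hVsub ht).2
  have hIV : I ⊆ V := fun x hx => ⟨hx.1, by rcases hx with ⟨hx1,hx2⟩; linarith⟩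
  have hIε : I ⊆ Set.Ioo (1-ε) 1 := fun x hx =>
    ⟨by rcases hx with ⟨hx1,hx2⟩; linarith, hx.2⟩
  have hab : (1:ℝ)-δ < 1 := by linarith
  -- f positive on I
  have hfpos : ∀ t ∈ I, 0 < f t := by
    intro t ht
    have hsub : Set.Icc t 1 ⊆ V := by
      intro x hx
      rcases hx with ⟨hx1, hx2⟩
      rcases ht with ⟨ht1, ht2⟩
      exact ⟨by linarith, by linarith⟩
    have hanti : StrictAntiOn f (Set.Icc t 1) := by
      apply strictAntiOn_of_deriv_neg (convex_Icc t 1)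
      · exact hfV.continuousOn.mono hsub
      · intro x hx
        rw [interior_Icc] at hx
        exact hneg x (hsub (Set.Ioo_subset_Icc_self hx))
    have h2 := hanti (Set.left_mem_Icc.mpr ht.2.le) (Set.right_mem_Icc.mpr ht.2.le) ht.2
    rw [h0] at h2
    linarith
  -- derivative facts on V
  have h5 : ContDiffOn ℝ 5 f V := hfV
  have h4 : ContDiffOn ℝ 4 (deriv f) V := h5.deriv_of_isOpen hVopen (by norm_num)
  have h3 : ContDiffOn ℝ 3 (deriv (deriv f)) V := h4.deriv_of_isOpen hVopen (by norm_num)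
  have h2 : ContDiffOn ℝ 2 (deriv (deriv (deriv f))) V := h3.deriv_of_isOpen hVopen (by norm_num)
  have hderivs : ∀ t ∈ V, HasDerivAt f (deriv f t) t ∧
      HasDerivAt (deriv f) (deriv (deriv f) t) t ∧
      HasDerivAt (deriv (deriv f)) (deriv (deriv (deriv f)) t) t ∧
      HasDerivAt (deriv (deriv (deriv f))) (deriv (deriv (deriv (deriv f))) t) t := by
    intro t ht
    have hmem := hVopen.mem_nhds ht
    exact ⟨((h5.differentiableOn (by norm_num)).differentiableAt hmem).hasDerivAt,
      ((h4.differentiableOn (by norm_num)).differentiableAt hmem).hasDerivAt,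
      ((h3.differentiableOn (by norm_num)).differentiableAt hmem).hasDerivAt,
      ((h2.differentiableOn (by norm_num)).differentiableAt hmem).hasDerivAt⟩
  -- G0 vanishes on I
  have hG0 : ∀ t ∈ I, (fun s => ((-1 : ℝ) * c) * (s ^ 0 * f s ^ 3 * deriv f s ^ 0 * deriv (deriv f) s ^ 0 * deriv (deriv (deriv f)) s ^ 0) + (-1 : ℝ) * (s ^ 1 * f s ^ 0 * deriv f s ^ 0 * deriv (deriv f) s ^ 0 * deriv (deriv (deriv f)) s ^ 0) + (1/2 : ℝ) * (s ^ 2 * f s ^ 1 * deriv f s ^ 2 * deriv (deriv f) s ^ 0 * deriv (deriv (deriv f)) s ^ 0) + (-1 : ℝ) * (s ^ 3 * f s ^ 0 * deriv f s ^ 3 * deriv (deriv f) s ^ 0 * deriv (deriv (deriv f)) s ^ 0)) t = 0 := by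
    intro t ht
    have h := heq t (hIε ht)
    have hf0 : f t ≠ 0 := (hfpos t ht).ne'
    have key : (fun s => ((-1 : ℝ) * c) * (s ^ 0 * f s ^ 3 * deriv f s ^ 0 * deriv (deriv f) s ^ 0 * deriv (deriv (deriv f)) s ^ 0) + (-1 : ℝ) * (s ^ 1 * f s ^ 0 * deriv f s ^ 0 * deriv (deriv f) s ^ 0 * deriv (deriv (deriv f)) s ^ 0) + (1/2 : ℝ) * (s ^ 2 * f s ^ 1 * deriv f s ^ 2 * deriv (deriv f) s ^ 0 * deriv (deriv (deriv f)) s ^ 0) + (-1 : ℝ) * (s ^ 3 * f s ^ 0 * deriv f s ^ 3 * deriv (deriv f) s ^ 0 * deriv (deriv (deriv f)) s ^ 0)) t =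
        f t ^ 3 * ((-t / f t ^ 3 + t ^ 2 * (deriv f t) ^ 2 / (2 * f t ^ 2)
          - t ^ 3 * (deriv f t) ^ 3 / f t ^ 3) - c) := by
      field_simp
      ring
    rw [key, h, sub_self, mul_zero]
  -- derivative computations
  have H0 : ∀ t ∈ V, HasDerivAt (fun s => ((-1 : ℝ) * c) * (s ^ 0 * f s ^ 3 * deriv f s ^ 0 * deriv (deriv f) s ^ 0 * deriv (deriv (deriv f)) s ^ 0) + (-1 : ℝ) * (s ^ 1 * f s ^ 0 * deriv f s ^ 0 * deriv (deriv f) s ^ 0 * deriv (deriv (deriv f)) s ^ 0) + (1/2 : ℝ) * (s ^ 2 * f s ^ 1 * deriv f s ^ 2 * deriv (deriv f) s ^ 0 * deriv (deriv (deriv f)) s ^ 0) + (-1 : ℝ) * (s ^ 3 * f s ^ 0 * deriv f s ^ 3 * deriv (deriv f) s ^ 0 * deriv (deriv (deriv f)) s ^ 0)) ((-1 : ℝ) * (t ^ 0 * f t ^ 0 * deriv f t ^ 0 * deriv (deriv f) t ^ 0 * deriv (deriv (deriv f)) t ^ 0) + ((-3 : ℝ) * c) * (t ^ 0 * f t ^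 2 * deriv f t ^ 1 * deriv (deriv f) t ^ 0 * deriv (deriv (deriv f)) t ^ 0) + (1 : ℝ) * (t ^ 1 * f t ^ 1 * deriv f t ^ 2 * deriv (deriv f) t ^ 0 * deriv (deriv (deriv f)) t ^ 0) + (-5/2 : ℝ) * (t ^ 2 * f t ^ 0 * deriv f t ^ 3 * deriv (deriv f) t ^ 0 * deriv (deriv (deriv f)) t ^ 0) + (1 : ℝ) * (t ^ 2 * f t ^ 1 * deriv f t ^ 1 * deriv (deriv f) t ^ 1 * deriv (deriv (deriv f)) t ^ 0) + (-3 : ℝ) * (t ^ 3 * f t ^ 0 * deriv f t ^ 2 * deriv (deriv f) t ^ 1 * deriv (deriv (deriv f)) t ^ 0)) t := by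
    intro t ht
    obtain ⟨hdf, hd1, hd2, hd3⟩ := hderivs t ht
    exact ((((((((((hasDerivAt_pow 0 t).mul (hdf.pow 3)).mul (hd1.pow 0)).mul (hd2.pow 0)).mul (hd3.pow 0)).const_mul ((-1 : ℝ) * c)).add ((((((hasDerivAt_pow 1 t).mul (hdf.pow 0)).mul (hd1.pow 0)).mul (hd2.pow 0)).mul (hd3.pow 0)).const_mul (-1 : ℝ))).add ((((((hasDerivAt_pow 2 t).mul (hdf.pow 1)).mul (hd1.pow 2)).mul (hd2.pow 0)).mul (hd3.pow 0)).const_mul (1/2 : ℝ))).add ((((((hasDerivAt_pow 3 t).mul (hdf.pow 0)).mul (hd1.pow 3)).mul (hd2.pow 0)).mul (hd3.pow 0)).const_mul (-1 : ℝ)))).congr_deriv (by norm_num; ring)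
  have H1 : ∀ t ∈ V, HasDerivAt (fun s => (-1 : ℝ) * (s ^ 0 * f s ^ 0 * deriv f s ^ 0 * deriv (deriv f) s ^ 0 * deriv (deriv (deriv f)) s ^ 0) + ((-3 : ℝ) * c) * (s ^ 0 * f s ^ 2 * deriv f s ^ 1 * deriv (deriv f) s ^ 0 * deriv (deriv (deriv f)) s ^ 0) + (1 : ℝ) * (s ^ 1 * f s ^ 1 * deriv f s ^ 2 * deriv (deriv f) s ^ 0 * deriv (deriv (deriv f)) s ^ 0) + (-5/2 : ℝ) * (s ^ 2 * f s ^ 0 * deriv f s ^ 3 * deriv (deriv f) s ^ 0 * deriv (deriv (deriv f)) s ^ 0) + (1 : ℝ) * (s ^ 2 * f s ^ 1 * deriv f s ^ 1 * deriv (deriv f) s ^ 1 * deriv (deriv (deriv f)) s ^ 0) + (-3 : ℝ) * (s ^ 3 * f s ^ 0 * deriv f s ^ 2 * deriv (deriv f) s ^ 1 * deriv (deriv (deriv f)) s ^ 0)) ((1 : ℝ) * (t ^ 0 * f t ^ 1 * deriv f t ^ 2 * deriv (deriv f) t ^ 0 * deriv (deriv (deriv f)) t ^ 0) + ((-6 :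 ℝ) * c) * (t ^ 0 * f t ^ 1 * deriv f t ^ 2 * deriv (deriv f) t ^ 0 * deriv (deriv (deriv f)) t ^ 0) + ((-3 : ℝ) * c) * (t ^ 0 * f t ^ 2 * deriv f t ^ 0 * deriv (deriv f) t ^ 1 * deriv (deriv (deriv f)) t ^ 0) + (-4 : ℝ) * (t ^ 1 * f t ^ 0 * deriv f t ^ 3 * deriv (deriv f) t ^ 0 * deriv (deriv (deriv f)) t ^ 0) + (4 : ℝ) * (t ^ 1 * f t ^ 1 * deriv f t ^ 1 * deriv (deriv f) t ^ 1 * deriv (deriv (deriv f)) t ^ 0) + (-31/2 : ℝ) * (t ^ 2 * f t ^ 0 * deriv f t ^ 2 * deriv (deriv f) t ^ 1 * deriv (deriv (deriv f)) t ^ 0) + (1 : ℝ) * (t ^ 2 * f t ^ 1 * deriv f t ^ 0 * deriv (deriv f) t ^ 2 * deriv (deriv (deriv f)) t ^ 0) + (1 : ℝ) * (t ^ 2 * f t ^ 1 * deriv f t ^ 1 * deriv (deriv f) t ^ 0 * deriv (deriv (deriv f)) t ^ 1) + (-6 : ℝ) * (t ^ 3 * f t ^ 0 * deriv f t ^ 1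 * deriv (deriv f) t ^ 2 * deriv (deriv (deriv f)) t ^ 0) + (-3 : ℝ) * (t ^ 3 * f t ^ 0 * deriv f t ^ 2 * deriv (deriv f) t ^ 0 * deriv (deriv (deriv f)) t ^ 1)) t := by
    intro t ht
    obtain ⟨hdf, hd1, hd2, hd3⟩ := hderivs t ht
    exact ((((((((((((hasDerivAt_pow 0 t).mul (hdf.pow 0)).mul (hd1.pow 0)).mul (hd2.pow 0)).mul (hd3.pow 0)).const_mul (-1 : ℝ)).add ((((((hasDerivAt_pow 0 t).mul (hdf.pow 2)).mul (hd1.pow 1)).mul (hd2.pow 0)).mul (hd3.pow 0)).const_mul ((-3 : ℝ) * c))).add ((((((hasDerivAt_pow 1 t).mul (hdf.pow 1)).mul (hd1.pow 2)).mul (hd2.pow 0)).mul (hd3.pow 0)).const_mul (1 : ℝ))).add ((((((hasDerivAt_pow 2 t).mul (hdf.pow 0)).mul (hd1.pow 3)).mul (hd2.pow 0)).mul (hd3.pow 0)).const_mul (-5/2 : ℝ))).add ((((((hasDerivAt_pow 2 t).mul (hdf.pow 1)).mul (hd1.pow 1)).mul (hd2.pow 1)).mul (hd3.pow 0)).const_mul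 (1 : ℝ))).add ((((((hasDerivAt_pow 3 t).mul (hdf.pow 0)).mul (hd1.pow 2)).mul (hd2.pow 1)).mul (hd3.pow 0)).const_mul (-3 : ℝ)))).congr_deriv (by norm_num; ring)
  have H2 : ∀ t ∈ V, HasDerivAt (fun s => (1 : ℝ) * (s ^ 0 * f s ^ 1 * deriv f s ^ 2 * deriv (deriv f) s ^ 0 * deriv (deriv (deriv f)) s ^ 0) + ((-6 : ℝ) * c) * (s ^ 0 * f s ^ 1 * deriv f s ^ 2 * deriv (deriv f) s ^ 0 * deriv (deriv (deriv f)) s ^ 0) + ((-3 : ℝ) * c) * (s ^ 0 * f s ^ 2 * deriv f s ^ 0 * deriv (deriv f) s ^ 1 * deriv (deriv (deriv f)) s ^ 0) + (-4 : ℝ) * (s ^ 1 * f s ^ 0 * deriv f s ^ 3 * deriv (deriv f) s ^ 0 * deriv (deriv (deriv f)) s ^ 0) + (4 : ℝ) * (s ^ 1 * f s ^ 1 * deriv f s ^ 1 * deriv (deriv f) s ^ 1 * deriv (deriv (deriv f)) s ^ 0) + (-31/2 : ℝ) * (s ^ 2 * f s ^ 0 * deriv f s ^ 2 * deriv (deriv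 f) s ^ 1 * deriv (deriv (deriv f)) s ^ 0) + (1 : ℝ) * (s ^ 2 * f s ^ 1 * deriv f s ^ 0 * deriv (deriv f) s ^ 2 * deriv (deriv (deriv f)) s ^ 0) + (1 : ℝ) * (s ^ 2 * f s ^ 1 * deriv f s ^ 1 * deriv (deriv f) s ^ 0 * deriv (deriv (deriv f)) s ^ 1) + (-6 : ℝ) * (s ^ 3 * f s ^ 0 * deriv f s ^ 1 * deriv (deriv f) s ^ 2 * deriv (deriv (deriv f)) s ^ 0) + (-3 : ℝ) * (s ^ 3 * f s ^ 0 * deriv f s ^ 2 * deriv (deriv f) s ^ 0 * deriv (deriv (deriv f)) s ^ 1)) ((-3 : ℝ) * (t ^ 0 * f t ^ 0 * deriv f t ^ 3 * deriv (deriv f) t ^ 0 * deriv (deriv (deriv f)) t ^ 0 * deriv (deriv (deriv (deriv f))) t ^ 0) + ((-6 : ℝ) * c) * (t ^ 0 * f t ^ 0 * deriv f t ^ 3 * deriv (deriv f) t ^ 0 * deriv (deriv (deriv f)) t ^ 0 * deriv (deriv (deriv (deriv f))) t ^ 0) + (6 : ℝ) * (t ^ 0 * f t ^ 1 * deriv f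 t ^ 1 * deriv (deriv f) t ^ 1 * deriv (deriv (deriv f)) t ^ 0 * deriv (deriv (deriv (deriv f))) t ^ 0) + ((-18 : ℝ) * c) * (t ^ 0 * f t ^ 1 * deriv f t ^ 1 * deriv (deriv f) t ^ 1 * deriv (deriv (deriv f)) t ^ 0 * deriv (deriv (deriv (deriv f))) t ^ 0) + ((-3 : ℝ) * c) * (t ^ 0 * f t ^ 2 * deriv f t ^ 0 * deriv (deriv f) t ^ 0 * deriv (deriv (deriv f)) t ^ 1 * deriv (deriv (deriv (deriv f))) t ^ 0) + (-39 : ℝ) * (t ^ 1 * f t ^ 0 * deriv f t ^ 2 * deriv (deriv f) t ^ 1 * deriv (deriv (deriv f)) t ^ 0 * deriv (deriv (deriv (deriv f))) t ^ 0) + (6 : ℝ) * (t ^ 1 * f t ^ 1 * deriv f t ^ 0 * deriv (deriv f) t ^ 2 * deriv (deriv (deriv f)) t ^ 0 * deriv (deriv (deriv (deriv f))) t ^ 0) + (6 : ℝ) * (t ^ 1 * f t ^ 1 * deriv f t ^ 1 * deriv (deriv f) t ^ 0 * deriv (deriv (deriv f)) t ^ 1 * deriv (deriv (deriv (deriv f)))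 t ^ 0) + (-48 : ℝ) * (t ^ 2 * f t ^ 0 * deriv f t ^ 1 * deriv (deriv f) t ^ 2 * deriv (deriv (deriv f)) t ^ 0 * deriv (deriv (deriv (deriv f))) t ^ 0) + (-47/2 : ℝ) * (t ^ 2 * f t ^ 0 * deriv f t ^ 2 * deriv (deriv f) t ^ 0 * deriv (deriv (deriv f)) t ^ 1 * deriv (deriv (deriv (deriv f))) t ^ 0) + (3 : ℝ) * (t ^ 2 * f t ^ 1 * deriv f t ^ 0 * deriv (deriv f) t ^ 1 * deriv (deriv (deriv f)) t ^ 1 * deriv (deriv (deriv (deriv f))) t ^ 0) + (1 : ℝ) * (t ^ 2 * f t ^ 1 * deriv f t ^ 1 * deriv (deriv f) t ^ 0 * deriv (deriv (deriv f)) t ^ 0 * deriv (deriv (deriv (deriv f))) t ^ 1) + (-6 : ℝ) * (t ^ 3 * f t ^ 0 * deriv f t ^ 0 * deriv (deriv f) t ^ 3 * deriv (deriv (deriv f)) t ^ 0 * deriv (deriv (deriv (deriv f))) t ^ 0) + (-18 : ℝ) * (t ^ 3 * f t ^ 0 * deriv f t ^ 1 * deriv (deriv f) t ^ 1 * deriv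 (deriv (deriv f)) t ^ 1 * deriv (deriv (deriv (deriv f))) t ^ 0) + (-3 : ℝ) * (t ^ 3 * f t ^ 0 * deriv f t ^ 2 * deriv (deriv f) t ^ 0 * deriv (deriv (deriv f)) t ^ 0 * deriv (deriv (deriv (deriv f))) t ^ 1)) t := by
    intro t ht
    obtain ⟨hdf, hd1, hd2, hd3⟩ := hderivs t ht
    exact ((((((((((((((((hasDerivAt_pow 0 t).mul (hdf.pow 1)).mul (hd1.pow 2)).mul (hd2.pow 0)).mul (hd3.pow 0)).const_mul (1 : ℝ)).add ((((((hasDerivAt_pow 0 t).mul (hdf.pow 1)).mul (hd1.pow 2)).mul (hd2.pow 0)).mul (hd3.pow 0)).const_mul ((-6 : ℝ) * c))).add ((((((hasDerivAt_pow 0 t).mul (hdf.pow 2)).mul (hd1.pow 0)).mul (hd2.pow 1)).mul (hd3.pow 0)).const_mul ((-3 : ℝ) * c))).add ((((((hasDerivAt_pow 1 t).mul (hdf.pow 0)).mul (hd1.pow 3)).mul (hd2.pow 0)).mul (hd3.pow 0)).const_mul (-4 : ℝ))).add ((((((hasDerivAt_pow 1 t).mul (hdf.pow 1)).mul (hd1.pow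 1)).mul (hd2.pow 1)).mul (hd3.pow 0)).const_mul (4 : ℝ))).add ((((((hasDerivAt_pow 2 t).mul (hdf.pow 0)).mul (hd1.pow 2)).mul (hd2.pow 1)).mul (hd3.pow 0)).const_mul (-31/2 : ℝ))).add ((((((hasDerivAt_pow 2 t).mul (hdf.pow 1)).mul (hd1.pow 0)).mul (hd2.pow 2)).mul (hd3.pow 0)).const_mul (1 : ℝ))).add ((((((hasDerivAt_pow 2 t).mul (hdf.pow 1)).mul (hd1.pow 1)).mul (hd2.pow 0)).mul (hd3.pow 1)).const_mul (1 : ℝ))).add ((((((hasDerivAt_pow 3 t).mul (hdf.pow 0)).mul (hd1.pow 1)).mul (hd2.pow 2)).mul (hd3.pow 0)).const_mul (-6 : ℝ))).add ((((((hasDerivAt_pow 3 t).mul (hdf.pow 0)).mul (hd1.pow 2)).mul (hd2.pow 0)).mul (hd3.pow 1)).const_mul (-3 : ℝ)))).congr_deriv (by norm_num; ring)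
  -- propagate zeros
  have hG1 : ∀ t ∈ I, (fun s => (-1 : ℝ) * (s ^ 0 * f s ^ 0 * deriv f s ^ 0 * deriv (deriv f) s ^ 0 * deriv (deriv (deriv f)) s ^ 0) + ((-3 : ℝ) * c) * (s ^ 0 * f s ^ 2 * deriv f s ^ 1 * deriv (deriv f) s ^ 0 * deriv (deriv (deriv f)) s ^ 0) + (1 : ℝ) * (s ^ 1 * f s ^ 1 * deriv f s ^ 2 * deriv (deriv f) s ^ 0 * deriv (deriv (deriv f)) s ^ 0) + (-5/2 : ℝ) * (s ^ 2 * f s ^ 0 * deriv f s ^ 3 * deriv (deriv f) s ^ 0 * deriv (deriv (deriv f)) s ^ 0) + (1 : ℝ) * (s ^ 2 * f s ^ 1 * deriv f s ^ 1 * deriv (deriv f) s ^ 1 * deriv (deriv (deriv f)) s ^ 0) + (-3 : ℝ) * (s ^ 3 * f s ^ 0 * deriv f s ^ 2 * deriv (deriv f) s ^ 1 * deriv (deriv (deriv f)) s ^ 0)) t = 0 :=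
    zero_on_Ioo_deriv hG0 (fun t ht => H0 t (hIV ht))
  have hG2 : ∀ t ∈ I, (fun s => (1 : ℝ) * (s ^ 0 * f s ^ 1 * deriv f s ^ 2 * deriv (deriv f) s ^ 0 * deriv (deriv (deriv f)) s ^ 0) + ((-6 : ℝ) * c) * (s ^ 0 * f s ^ 1 * deriv f s ^ 2 * deriv (deriv f) s ^ 0 * deriv (deriv (deriv f)) s ^ 0) + ((-3 : ℝ) * c) * (s ^ 0 * f s ^ 2 * deriv f s ^ 0 * deriv (deriv f) s ^ 1 * deriv (deriv (deriv f)) s ^ 0) + (-4 : ℝ) * (s ^ 1 * f s ^ 0 * deriv f s ^ 3 * deriv (deriv f) s ^ 0 * deriv (deriv (deriv f)) s ^ 0) + (4 : ℝ) * (s ^ 1 * f s ^ 1 * deriv f s ^ 1 * deriv (deriv f) s ^ 1 * deriv (deriv (deriv f)) s ^ 0) + (-31/2 : ℝ) * (s ^ 2 * f s ^ 0 * deriv f s ^ 2 * deriv (deriv f) s ^ 1 * deriv (deriv (deriv f)) s ^ 0) + (1 : ℝ) * (s ^ 2 * f s ^ 1 * deriv f s ^ 0 * deriv (deriv f) s ^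 2 * deriv (deriv (deriv f)) s ^ 0) + (1 : ℝ) * (s ^ 2 * f s ^ 1 * deriv f s ^ 1 * deriv (deriv f) s ^ 0 * deriv (deriv (deriv f)) s ^ 1) + (-6 : ℝ) * (s ^ 3 * f s ^ 0 * deriv f s ^ 1 * deriv (deriv f) s ^ 2 * deriv (deriv (deriv f)) s ^ 0) + (-3 : ℝ) * (s ^ 3 * f s ^ 0 * deriv f s ^ 2 * deriv (deriv f) s ^ 0 * deriv (deriv (deriv f)) s ^ 1)) t = 0 :=
    zero_on_Ioo_deriv hG1 (fun t ht => H1 t (hIV ht))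
  have hb0 : (fun s => ((-1 : ℝ) * c) * (s ^ 0 * f s ^ 3 * deriv f s ^ 0 * deriv (deriv f) s ^ 0 * deriv (deriv (deriv f)) s ^ 0) + (-1 : ℝ) * (s ^ 1 * f s ^ 0 * deriv f s ^ 0 * deriv (deriv f) s ^ 0 * deriv (deriv (deriv f)) s ^ 0) + (1/2 : ℝ) * (s ^ 2 * f s ^ 1 * deriv f s ^ 2 * deriv (deriv f) s ^ 0 * deriv (deriv (deriv f)) s ^ 0) + (-1 : ℝ) * (s ^ 3 * f s ^ 0 * deriv f s ^ 3 * deriv (deriv f) s ^ 0 * deriv (deriv (deriv f)) s ^ 0)) (1:ℝ) = 0 := by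
    simp only []
    rw [h0, h1]
    norm_num
  have key1 : (fun s => (-1 : ℝ) * (s ^ 0 * f s ^ 0 * deriv f s ^ 0 * deriv (deriv f) s ^ 0 * deriv (deriv (deriv f)) s ^ 0) + ((-3 : ℝ) * c) * (s ^ 0 * f s ^ 2 * deriv f s ^ 1 * deriv (deriv f) s ^ 0 * deriv (deriv (deriv f)) s ^ 0) + (1 : ℝ) * (s ^ 1 * f s ^ 1 * deriv f s ^ 2 * deriv (deriv f) s ^ 0 * deriv (deriv (deriv f)) s ^ 0) + (-5/2 : ℝ) * (s ^ 2 * f s ^ 0 * deriv f s ^ 3 * deriv (deriv f) s ^ 0 * deriv (deriv (deriv f)) s ^ 0) + (1 : ℝ) * (s ^ 2 * f s ^ 1 * deriv f s ^ 1 * deriv (deriv f) s ^ 1 * deriv (deriv (deriv f)) s ^ 0) + (-3 : ℝ) * (s ^ 3 * f s ^ 0 * deriv f s ^ 2 * deriv (deriv f) s ^ 1 * deriv (deriv (deriv f)) s ^ 0)) (1:ℝ) = 0 :=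
    boundary_deriv_zero hab (H0 1 h1V) hG0 hb0
  have key2 : (fun s => (1 : ℝ) * (s ^ 0 * f s ^ 1 * deriv f s ^ 2 * deriv (deriv f) s ^ 0 * deriv (deriv (deriv f)) s ^ 0) + ((-6 : ℝ) * c) * (s ^ 0 * f s ^ 1 * deriv f s ^ 2 * deriv (deriv f) s ^ 0 * deriv (deriv (deriv f)) s ^ 0) + ((-3 : ℝ) * c) * (s ^ 0 * f s ^ 2 * deriv f s ^ 0 * deriv (deriv f) s ^ 1 * deriv (deriv (deriv f)) s ^ 0) + (-4 : ℝ) * (s ^ 1 * f s ^ 0 * deriv f s ^ 3 * deriv (deriv f) s ^ 0 * deriv (deriv (deriv f)) s ^ 0) + (4 : ℝ) * (s ^ 1 * f s ^ 1 * deriv f s ^ 1 * deriv (deriv f) s ^ 1 * deriv (deriv (deriv f)) s ^ 0) + (-31/2 : ℝ) * (s ^ 2 * f s ^ 0 * deriv f s ^ 2 * deriv (deriv f) s ^ 1 * deriv (deriv (deriv f)) s ^ 0) + (1 : ℝ) * (s ^ 2 * f s ^ 1 * deriv f s ^ 0 * deriv (deriv f) s ^ 2 * deriv (deriv (deriv f))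 s ^ 0) + (1 : ℝ) * (s ^ 2 * f s ^ 1 * deriv f s ^ 1 * deriv (deriv f) s ^ 0 * deriv (deriv (deriv f)) s ^ 1) + (-6 : ℝ) * (s ^ 3 * f s ^ 0 * deriv f s ^ 1 * deriv (deriv f) s ^ 2 * deriv (deriv (deriv f)) s ^ 0) + (-3 : ℝ) * (s ^ 3 * f s ^ 0 * deriv f s ^ 2 * deriv (deriv f) s ^ 0 * deriv (deriv (deriv f)) s ^ 1)) (1:ℝ) = 0 :=
    boundary_deriv_zero hab (H1 1 h1V) hG1 key1
  have key3 : (fun s => (-3 : ℝ) * (s ^ 0 * f s ^ 0 * deriv f s ^ 3 * deriv (deriv f) s ^ 0 * deriv (deriv (deriv f)) s ^ 0 * deriv (deriv (deriv (deriv f))) s ^ 0) + ((-6 : ℝ) * c) * (s ^ 0 * f s ^ 0 * deriv f s ^ 3 * deriv (deriv f) s ^ 0 * deriv (deriv (deriv f)) s ^ 0 * deriv (deriv (deriv (deriv f))) s ^ 0) + (6 : ℝ) * (s ^ 0 * f s ^ 1 * deriv f s ^ 1 * deriv (deriv f) s ^ 1 * deriv (deriv (deriv f)) s ^ 0 * deriv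 (deriv (deriv (deriv f))) s ^ 0) + ((-18 : ℝ) * c) * (s ^ 0 * f s ^ 1 * deriv f s ^ 1 * deriv (deriv f) s ^ 1 * deriv (deriv (deriv f)) s ^ 0 * deriv (deriv (deriv (deriv f))) s ^ 0) + ((-3 : ℝ) * c) * (s ^ 0 * f s ^ 2 * deriv f s ^ 0 * deriv (deriv f) s ^ 0 * deriv (deriv (deriv f)) s ^ 1 * deriv (deriv (deriv (deriv f))) s ^ 0) + (-39 : ℝ) * (s ^ 1 * f s ^ 0 * deriv f s ^ 2 * deriv (deriv f) s ^ 1 * deriv (deriv (deriv f)) s ^ 0 * deriv (deriv (deriv (deriv f))) s ^ 0) + (6 : ℝ) * (s ^ 1 * f s ^ 1 * deriv f s ^ 0 * deriv (deriv f) s ^ 2 * deriv (deriv (deriv f)) s ^ 0 * deriv (deriv (deriv (deriv f))) s ^ 0) + (6 : ℝ) * (s ^ 1 * f s ^ 1 * deriv f s ^ 1 * deriv (deriv f) s ^ 0 * deriv (deriv (deriv f)) s ^ 1 * deriv (deriv (deriv (deriv f))) s ^ 0) + (-48 : ℝ) * (s ^ 2 * f s ^ 0 * deriv f s ^ 1 *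 deriv (deriv f) s ^ 2 * deriv (deriv (deriv f)) s ^ 0 * deriv (deriv (deriv (deriv f))) s ^ 0) + (-47/2 : ℝ) * (s ^ 2 * f s ^ 0 * deriv f s ^ 2 * deriv (deriv f) s ^ 0 * deriv (deriv (deriv f)) s ^ 1 * deriv (deriv (deriv (deriv f))) s ^ 0) + (3 : ℝ) * (s ^ 2 * f s ^ 1 * deriv f s ^ 0 * deriv (deriv f) s ^ 1 * deriv (deriv (deriv f)) s ^ 1 * deriv (deriv (deriv (deriv f))) s ^ 0) + (1 : ℝ) * (s ^ 2 * f s ^ 1 * deriv f s ^ 1 * deriv (deriv f) s ^ 0 * deriv (deriv (deriv f)) s ^ 0 * deriv (deriv (deriv (deriv f))) s ^ 1) + (-6 : ℝ) * (s ^ 3 * f s ^ 0 * deriv f s ^ 0 * deriv (deriv f) s ^ 3 * deriv (deriv (deriv f)) s ^ 0 * deriv (deriv (deriv (deriv f))) s ^ 0) + (-18 : ℝ) * (s ^ 3 * f s ^ 0 * deriv f s ^ 1 * deriv (deriv f) s ^ 1 * deriv (deriv (deriv f)) s ^ 1 * deriv (deriv (deriv (deriv f))) s ^ 0) + (-3 :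 ℝ) * (s ^ 3 * f s ^ 0 * deriv f s ^ 2 * deriv (deriv f) s ^ 0 * deriv (deriv (deriv f)) s ^ 0 * deriv (deriv (deriv (deriv f))) s ^ 1)) (1:ℝ) = 0 :=
    boundary_deriv_zero hab (H2 1 h1V) hG2 key2
  simp only [] at key1 key2 key3
  rw [h0, h1] at key1 key2 key3
  have ha : deriv (deriv f) 1 = 1/2 := by norm_num at key1; linarith
  rw [ha] at key2 key3
  have hbb : deriv (deriv (deriv f)) 1 = -3/4 := by norm_num at key2; linarith
  rw [hbb] at key3
  have hd : deriv (deriv (deriv (deriv f))) 1 = (15 + 16*c)/8 := by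
    norm_num at key3; linarith
  have i2 : iteratedDeriv 2 f = deriv (deriv f) := by
    rw [show (2:ℕ) = 1+1 from rfl, iteratedDeriv_succ, iteratedDeriv_one]
  have i3 : iteratedDeriv 3 f = deriv (deriv (deriv f)) := by
    rw [show (3:ℕ) = 2+1 from rfl, iteratedDeriv_succ, i2]
  have i4 : iteratedDeriv 4 f = deriv (deriv (deriv (deriv f))) := by
    rw [show (4:ℕ) = 3+1 from rfl, iteratedDeriv_succ, i3]
  exact ⟨by rw [i2]; exact ha, by rw [i3]; exact hbb, by rw [i4]; exact hd⟩
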